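/- Let 𝓑 be a homothecy invariant density basis of bounded open convex sets in ℝⁿ, and assume (as guaranteed by the Busemann–Feller theorem) that for every λ ∈ (0,1) there exists a finite constant c(λ) such that |{x ∈ ℝⁿ : M_𝓑 χ_E(x) > λ}| ≤ c(λ)|E| for all measurable sets E of finite measure. Then for every measurable set E ⊆ ℝⁿ, |{x ∈ ℝⁿ : M_𝓑 χ_E(x) = 1}| = |E|. -/

import Mathlib

open MeasureTheory Set Filter
open scoped ENNReal

/-- The geometric maximal operator associated to a collection `B` of sets. -/
noncomputable def MB {n : ℕ} (B : Set (Set (EuclideanSpace ℝ (Fin n))))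
    (f : EuclideanSpace ℝ (Fin n) → ℝ≥0∞) (x : EuclideanSpace ℝ (Fin n)) : ℝ≥0∞ :=
  ⨆ (R ∈ B) (_ : x ∈ R), (∫⁻ y in R, f y) / volume R

/-- `B` is a density basis: every point lies in sets of `B` of arbitrarily
small diameter, and averages of indicators over shrinking sets of `B`
converge a.e. to the indicator. -/
def IsDensityBasis {n : ℕ} (B : Set (Set (EuclideanSpace ℝ (Fin n)))) : Prop :=
  (∀ x : EuclideanSpace ℝ (Fin n), ∀ ε : ℝ, 0 < ε →
    ∃ R ∈ B, x ∈ R ∧ Metric.diam R < ε) ∧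
  ∀ E : Set (EuclideanSpace ℝ (Fin n)), MeasurableSet E → volume E < ⊤ →
    ∀ᵐ x : EuclideanSpace ℝ (Fin n) ∂volume,
      ∀ R : ℕ → Set (EuclideanSpace ℝ (Fin n)),
        (∀ k, R k ∈ B) → (∀ k, x ∈ R k) →
        Filter.Tendsto (fun k => Metric.diam (R k)) Filter.atTop (nhds 0) →
        Filter.Tendsto (fun k => (∫⁻ y in R k, E.indicator 1 y) / volume (R k))
          Filter.atTop (nhds (E.indicator (1 : EuclideanSpace ℝ (Fin n) → ℝ≥0∞) x))

/-! At almost every `x ∉ E`, the density property gives `r₀ > 0` such that every set of `B`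
through `x` of diameter `< r₀` is less than half filled by `E`. If `M_B χ_E (x) = 1`, pick
`R ∈ B` through `x` almost filled by `E`. Its contraction about `x` by a small factor `t` lies in
`B` and is still half filled by `E`, so `diam R ≥ r₀ / t` is large. Contracting `R` by `1/8`
about a point of `R` far from `x` then gives a piece of `R` of relative measure `8⁻ⁿ`, far from
`x` and half filled by `E`. Hence `M_B χ_{E \ B(0, m)} (x) > 8⁻ⁿ / 4` for every `m`, and the
weak-type bound yields `|{M_B χ_E = 1} \ E| ≤ c |E \ B(0, m)| → 0`. -/

open Metric
open scoped Topology

section General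

theorem exists_seq_tendsto_diam_zero {X : Type*} [PseudoMetricSpace X] {P : Set X → Prop}
    (h : ∀ ε > 0, ∃ R, P R ∧ diam R < ε) :
    ∃ R : ℕ → Set X, (∀ k, P (R k)) ∧ Tendsto (fun k => diam (R k)) atTop (𝓝 0) := by
  choose R hP hR using fun k : ℕ => h (1 / (k + 1)) Nat.one_div_pos_of_nat
  exact ⟨R, hP, squeeze_zero (fun _ => diam_nonneg) (fun k => (hR k).le)
    tendsto_one_div_add_atTop_nhds_zero_nat⟩

theorem exists_le_dist_of_diam_pos {X : Type*} [PseudoMetricSpace X] {R : Set X}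
    (hR : 0 < diam R) (x : X) : ∃ p ∈ R, diam R / 4 ≤ dist p x := by
  by_contra! h
  have : diam R ≤ diam R / 2 := diam_le_of_forall_dist_le (by positivity) fun y hy z hz =>
    (dist_triangle_right y z x).trans (by linarith [h y hy, h z hz])
  linarith

theorem tendsto_measure_diff_ball_atTop {X : Type*} [PseudoMetricSpace X] [MeasurableSpace X]
    [OpensMeasurableSpace X] {μ : Measure X} {E : Set X} (hE : MeasurableSet E)
    (hfin : μ E ≠ ∞) (x : X) :
    Tendsto (fun m : ℕ => μ (E \ ball x m)) atTop (𝓝 0) := by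
  have h := tendsto_measure_iInter_atTop (μ := μ) (s := fun m : ℕ => E \ ball x m)
    (fun _ => (hE.diff measurableSet_ball).nullMeasurableSet)
    (fun _ _ hij => sdiff_subset_sdiff_right (ball_subset_ball (by exact_mod_cast hij)))
    ⟨0, ne_top_of_le_ne_top hfin (measure_mono sdiff_subset)⟩
  rwa [← sdiff_iUnion, iUnion_ball_nat, sdiff_univ, measure_empty] at h

theorem setLIntegral_indicator_one {α : Type*} [MeasurableSpace α] {μ : Measure α}
    {E : Set α} (hE : MeasurableSet E) (R : Set α) :
    ∫⁻ y in R, E.indicator 1 y ∂μ = μ (E ∩ R) := by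
  rw [lintegral_indicator_one hE, Measure.restrict_apply hE]

theorem le_measure_inter_of_measure_diff_le {α : Type*} [MeasurableSpace α] {μ : Measure α}
    {E P R : Set α} {δ : ℝ≥0∞} (hPR : P ⊆ R) (hRE : μ (R \ E) ≤ δ) (hδ : δ ≠ ∞)
    (hP : 2 * δ ≤ μ P) : δ ≤ μ (E ∩ P) := by
  refine ENNReal.le_of_add_le_add_right hδ ?_
  calc δ + δ = 2 * δ := (two_mul δ).symm
    _ ≤ μ P := hP
    _ ≤ μ (P ∩ E) + μ (P \ E) := measure_le_inter_add_sdiff μ P E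
    _ ≤ μ (E ∩ P) + δ := by
      rw [inter_comm]
      gcongr
      exact (measure_mono (sdiff_subset_sdiff_left hPR)).trans hRE

variable {V : Type*} [NormedAddCommGroup V] [NormedSpace ℝ V]

theorem Convex.image_homothety_subset {R : Set V} (hR : Convex ℝ R) {c : V} (hc : c ∈ R)
    {t : ℝ} (ht₀ : 0 ≤ t) (ht₁ : t ≤ 1) : AffineMap.homothety c t '' R ⊆ R := by
  rintro _ ⟨y, hy, rfl⟩
  rw [AffineMap.homothety_eq_lineMap]
  exact hR.lineMap_mem hc hy ⟨ht₀, ht₁⟩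

theorem diam_image_homothety_le {R : Set V} (hR : Bornology.IsBounded R) (c : V) {t : ℝ}
    (ht : 0 ≤ t) : diam (AffineMap.homothety c t '' R) ≤ t * diam R := by
  refine diam_le_of_forall_dist_le (by positivity) ?_
  rintro _ ⟨u, hu, rfl⟩ _ ⟨v, hv, rfl⟩
  have : dist (AffineMap.homothety c t u) (AffineMap.homothety c t v) = t * dist u v := by
    simp [AffineMap.homothety_apply, dist_eq_norm, ← smul_sub, norm_smul, abs_of_nonneg ht]
  rw [this]
  exact mul_le_mul_of_nonneg_left (dist_le_diam_of_mem hR hu hv) ht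

theorem image_homothety_subset_compl_ball {R : Set V} (hR : Bornology.IsBounded R) {p x : V}
    (hp : p ∈ R) (hpx : diam R / 4 ≤ dist p x) :
    AffineMap.homothety p (8⁻¹ : ℝ) '' R ⊆ (ball x (diam R / 8))ᶜ := by
  rintro _ ⟨u, hu, rfl⟩
  have hup : dist (AffineMap.homothety p (8⁻¹ : ℝ) u) p ≤ diam R / 8 := by
    rw [dist_homothety_center, Real.norm_of_nonneg (by norm_num)]
    linarith [dist_le_diam_of_mem hR hp hu]
  rw [mem_compl_iff, mem_ball, not_lt]
  linarith [dist_triangle p (AffineMap.homothety p (8⁻¹ : ℝ) u) x, dist_comm p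
    (AffineMap.homothety p (8⁻¹ : ℝ) u)]

variable [FiniteDimensional ℝ V] [MeasurableSpace V] [BorelSpace V] (μ : Measure V)
  [μ.IsAddHaarMeasure]

theorem Convex.measure_image_homothety_div_two_le {R E : Set V} (hR : Convex ℝ R)
    (hRfin : μ R ≠ ∞) {c : V} (hc : c ∈ R) {t : ℝ} (ht₀ : 0 < t) (ht₁ : t ≤ 1)
    (hRE : μ (R \ E) ≤ ENNReal.ofReal (t ^ Module.finrank ℝ V) / 2 * μ R) :
    μ (AffineMap.homothety c t '' R) / 2 ≤ μ (E ∩ AffineMap.homothety c t '' R) := by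
  have hvol : μ (AffineMap.homothety c t '' R) / 2
      = ENNReal.ofReal (t ^ Module.finrank ℝ V) / 2 * μ R := by
    rw [Measure.addHaar_image_homothety, abs_of_pos (by positivity),
      ENNReal.mul_div_right_comm]
  refine le_measure_inter_of_measure_diff_le (hR.image_homothety_subset hc ht₀.le ht₁)
    (hvol ▸ hRE) ?_ ?_
  · rw [hvol]
    exact ENNReal.mul_ne_top (ENNReal.div_ne_top ENNReal.ofReal_ne_top two_ne_zero) hRfin
  · rw [ENNReal.mul_div_cancel two_ne_zero ENNReal.ofNat_ne_top]

end General

section MaximalOperator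

variable {n : ℕ} {B : Set (Set (EuclideanSpace ℝ (Fin n)))} {E : Set (EuclideanSpace ℝ (Fin n))}

local notation "ℝⁿ" => EuclideanSpace ℝ (Fin n)

theorem MB_indicator (hE : MeasurableSet E) (x : ℝⁿ) :
    MB B (E.indicator 1) x = ⨆ R ∈ B, ⨆ (_ : x ∈ R), volume (E ∩ R) / volume R := by
  simp only [MB, setLIntegral_indicator_one hE]

theorem MB_mono {f g : ℝⁿ → ℝ≥0∞} (h : f ≤ g) (x : ℝⁿ) : MB B f x ≤ MB B g x :=
  iSup₂_mono fun _ _ => iSup_mono fun _ =>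
    ENNReal.div_le_div_right (lintegral_mono fun y => h y) _

theorem MB_indicator_le_one (hE : MeasurableSet E) (x : ℝⁿ) : MB B (E.indicator 1) x ≤ 1 := by
  rw [MB_indicator hE]
  exact iSup₂_le fun R _ => iSup_le fun _ =>
    ENNReal.div_le_of_le_mul (by rw [one_mul]; exact measure_mono inter_subset_right)

theorem measure_inter_div_le_MB (hE : MeasurableSet E) {R : Set ℝⁿ} {x : ℝⁿ} (hR : R ∈ B)
    (hx : x ∈ R) : volume (E ∩ R) / volume R ≤ MB B (E.indicator 1) x := by
  rw [MB_indicator hE]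
  exact le_iSup₂_of_le R hR (le_iSup_of_le hx le_rfl)

theorem IsDensityBasis.ae_MB_indicator_eq_one (hdens : IsDensityBasis B)
    (hE : MeasurableSet E) : ∀ᵐ x, x ∈ E → MB B (E.indicator 1) x = 1 := by
  -- `E` may have infinite measure, so apply the density property to its bounded parts.
  have hdens_ball : ∀ᵐ x, ∀ m : ℕ, ∀ R : ℕ → Set ℝⁿ, (∀ k, R k ∈ B) → (∀ k, x ∈ R k) →
      Tendsto (fun k => diam (R k)) atTop (𝓝 0) →
      Tendsto (fun k => volume (E ∩ ball 0 m ∩ R k) / volume (R k)) atTop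
        (𝓝 ((E ∩ ball 0 m).indicator 1 x)) := by
    refine ae_all_iff.2 fun m => ?_
    have hm := hE.inter (measurableSet_ball (x := (0 : ℝⁿ)) (ε := m))
    simpa only [setLIntegral_indicator_one hm] using hdens.2 _ hm
      ((measure_mono inter_subset_right).trans_lt measure_ball_lt_top)
  filter_upwards [hdens_ball] with x hx hxE
  obtain ⟨m, hm⟩ := exists_nat_gt ‖x‖
  obtain ⟨R, hR, hdiam⟩ := exists_seq_tendsto_diam_zero (P := fun R => R ∈ B ∧ x ∈ R)
    fun ε hε => (hdens.1 x ε hε).imp fun R ⟨hRB, hxR, hRε⟩ => ⟨⟨hRB, hxR⟩, hRε⟩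
  have hlim := hx m R (fun k => (hR k).1) (fun k => (hR k).2) hdiam
  rw [indicator_of_mem (mem_inter hxE (mem_ball_zero_iff.2 hm)), Pi.one_apply] at hlim
  refine le_antisymm (MB_indicator_le_one hE x) (le_of_tendsto' hlim fun k => ?_)
  calc volume (E ∩ ball 0 m ∩ R k) / volume (R k) ≤ volume (E ∩ R k) / volume (R k) := by
        gcongr; exact inter_subset_left
    _ ≤ MB B (E.indicator 1) x := measure_inter_div_le_MB hE (hR k).1 (hR k).2

theorem IsDensityBasis.ae_measure_inter_div_lt_of_diam_lt (hdens : IsDensityBasis B)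
    (hE : MeasurableSet E) (hfin : volume E ≠ ∞) :
    ∀ᵐ x, x ∉ E → ∃ r₀ > 0, ∀ Q ∈ B, x ∈ Q → diam Q < r₀ → volume (E ∩ Q) / volume Q < 2⁻¹ := by
  filter_upwards [hdens.2 E hE hfin.lt_top] with x hx hxE
  by_contra! h
  obtain ⟨Q, hQ, hdiam⟩ := exists_seq_tendsto_diam_zero
    (P := fun Q => Q ∈ B ∧ x ∈ Q ∧ 2⁻¹ ≤ volume (E ∩ Q) / volume Q) fun ε hε =>
    (h ε hε).imp fun Q ⟨hQB, hxQ, hQε, hQavg⟩ => ⟨⟨hQB, hxQ, hQavg⟩, hQε⟩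
  have hlim := hx Q (fun k => (hQ k).1) (fun k => (hQ k).2.1) hdiam
  simp only [setLIntegral_indicator_one hE, indicator_of_notMem hxE] at hlim
  obtain ⟨k, hk⟩ := (hlim.eventually (gt_mem_nhds (by norm_num : (0 : ℝ≥0∞) < 2⁻¹))).exists
  exact (hQ k).2.2.not_gt hk

theorem exists_measure_diff_le_of_MB_eq_one (hB : ∀ R ∈ B, Bornology.IsBounded R)
    (hE : MeasurableSet E) {x : ℝⁿ} (hx : MB B (E.indicator 1) x = 1) {ε : ℝ≥0∞} (hε : 0 < ε) :
    ∃ R ∈ B, x ∈ R ∧ volume (R \ E) ≤ ε * volume R := by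
  have h : 1 - ε < MB B (E.indicator 1) x := by
    rw [hx]
    exact ENNReal.sub_lt_self ENNReal.one_ne_top one_ne_zero hε.ne'
  simp only [MB_indicator hE, lt_iSup_iff] at h
  obtain ⟨R, hR, hxR, hRavg⟩ := h
  have hfin : volume (R ∩ E) ≠ ∞ :=
    ne_top_of_le_ne_top (hB R hR).measure_lt_top.ne (measure_mono inter_subset_left)
  refine ⟨R, hR, hxR, ENNReal.le_of_add_le_add_right hfin ?_⟩
  calc volume (R \ E) + volume (R ∩ E) = volume R := measure_sdiff_add_inter R hE
    _ ≤ (ε + (1 - ε)) * volume R := le_mul_of_one_le_left' le_add_tsub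
    _ = ε * volume R + (1 - ε) * volume R := add_mul _ _ _
    _ ≤ ε * volume R + volume (R ∩ E) := by
      rw [inter_comm]
      gcongr
      exact ENNReal.mul_le_of_le_div hRavg.le

theorem image_homothety_mem
    (hhom : ∀ R ∈ B, ∀ (a : ℝⁿ) (t : ℝ), 0 < t → (fun x => a + t • x) '' R ∈ B)
    {R : Set ℝⁿ} (hR : R ∈ B) (c : ℝⁿ) {t : ℝ} (ht : 0 < t) :
    AffineMap.homothety c t '' R ∈ B := by
  convert hhom R hR (c - t • c) t ht using 1
  refine image_congr fun y _ => ?_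
  rw [AffineMap.homothety_apply, vsub_eq_sub, vadd_eq_add, smul_sub]
  abel

theorem le_mul_diam_of_measure_inter_div_lt
    (hB : ∀ R ∈ B, IsOpen R ∧ Bornology.IsBounded R ∧ Convex ℝ R)
    (hhom : ∀ R ∈ B, ∀ (a : ℝⁿ) (t : ℝ), 0 < t → (fun x => a + t • x) '' R ∈ B)
    {x : ℝⁿ} {r₀ : ℝ}
    (hsmall : ∀ Q ∈ B, x ∈ Q → diam Q < r₀ → volume (E ∩ Q) / volume Q < 2⁻¹)
    {R : Set ℝⁿ} (hR : R ∈ B) (hxR : x ∈ R) {t : ℝ} (ht₀ : 0 < t) (ht₁ : t ≤ 1)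
    (hRE : volume (R \ E) ≤ ENNReal.ofReal (t ^ n) / 2 * volume R) :
    r₀ ≤ t * diam R := by
  obtain ⟨-, hRb, hRc⟩ := hB R hR
  set R' := AffineMap.homothety x t '' R
  have hR' : R' ∈ B := image_homothety_mem hhom hR x ht₀
  obtain ⟨hR'o, hR'b, -⟩ := hB R' hR'
  have hxR' : x ∈ R' := ⟨x, hxR, AffineMap.homothety_apply_same x t⟩
  have hhalf : 2⁻¹ ≤ volume (E ∩ R') / volume R' := by
    calc (2⁻¹ : ℝ≥0∞) = volume R' / 2 / volume R' := by
          rw [ENNReal.div_right_comm, ENNReal.div_self (hR'o.measure_pos volume ⟨x, hxR'⟩).ne'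
            hR'b.measure_lt_top.ne, one_div]
      _ ≤ volume (E ∩ R') / volume R' := by
          gcongr
          refine hRc.measure_image_homothety_div_two_le volume hRb.measure_lt_top.ne hxR ht₀ ht₁ ?_
          rwa [finrank_euclideanSpace_fin]
  calc r₀ ≤ diam R' := not_lt.1 fun h => (hsmall R' hR' hxR' h).not_ge hhalf
    _ ≤ t * diam R := diam_image_homothety_le hRb x ht₀.le

theorem ofReal_lt_MB_indicator_diff_ball
    (hB : ∀ R ∈ B, IsOpen R ∧ Bornology.IsBounded R ∧ Convex ℝ R)
    (hhom : ∀ R ∈ B, ∀ (a : ℝⁿ) (t : ℝ), 0 < t → (fun x => a + t • x) '' R ∈ B)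
    (hE : MeasurableSet E) {x : ℝⁿ} (hx : MB B (E.indicator 1) x = 1) {r₀ : ℝ} (hr₀ : 0 < r₀)
    (hsmall : ∀ Q ∈ B, x ∈ Q → diam Q < r₀ → volume (E ∩ Q) / volume Q < 2⁻¹)
    {r : ℝ} (hr : 0 ≤ r) :
    ENNReal.ofReal (8⁻¹ ^ n / 4) < MB B ((E \ ball x r).indicator 1) x := by
  set a : ℝ := 8⁻¹ ^ n
  set t : ℝ := r₀ / (8 * r + r₀)
  have ht₀ : 0 < t := by positivity
  have ht₁ : t ≤ 1 := div_le_one_of_le₀ (by linarith) (by positivity)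
  obtain ⟨R, hR, hxR, hRE⟩ := exists_measure_diff_le_of_MB_eq_one (fun R hR => (hB R hR).2.1)
    hE hx (ε := min (ENNReal.ofReal (t ^ n)) (ENNReal.ofReal a) / 2)
    (ENNReal.div_pos (lt_min (by positivity) (by positivity)).ne' ENNReal.ofNat_ne_top)
  obtain ⟨hRo, hRb, hRc⟩ := hB R hR
  have hdiam : 8 * r < diam R := by
    have h := le_mul_diam_of_measure_inter_div_lt hB hhom hsmall hR hxR ht₀ ht₁
      (hRE.trans (by gcongr; exact min_le_left _ _))
    rw [div_mul_eq_mul_div, le_div_iff₀ (by positivity)] at h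
    nlinarith
  obtain ⟨p, hp, hpx⟩ := exists_le_dist_of_diam_pos (by linarith) x
  set P := AffineMap.homothety p (8⁻¹ : ℝ) '' R
  have hPE : volume P / 2 ≤ volume (E ∩ P) := by
    refine hRc.measure_image_homothety_div_two_le volume hRb.measure_lt_top.ne hp
      (by norm_num) (by norm_num) ?_
    rw [finrank_euclideanSpace_fin]
    exact hRE.trans (by gcongr; exact min_le_right _ _)
  have hPF : E ∩ P ⊆ (E \ ball x r) ∩ R := fun y ⟨hyE, hyP⟩ =>
    ⟨⟨hyE, fun hy => image_homothety_subset_compl_ball hRb hp hpx hyP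
      (ball_subset_ball (by linarith) hy)⟩,
      hRc.image_homothety_subset hp (by norm_num) (by norm_num) hyP⟩
  calc ENNReal.ofReal (a / 4) < ENNReal.ofReal a / 2 := by
        rw [← ENNReal.ofReal_ofNat 2, ← ENNReal.ofReal_div_of_pos two_pos,
          ENNReal.ofReal_lt_ofReal_iff (by positivity)]
        linarith [show 0 < a by positivity]
    _ = volume P / 2 / volume R := by
        rw [Measure.addHaar_image_homothety, finrank_euclideanSpace_fin, abs_of_pos (by positivity),
          ENNReal.div_right_comm, ENNReal.mul_div_cancel_right
            (hRo.measure_pos volume ⟨x, hxR⟩).ne' hRb.measure_lt_top.ne]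
    _ ≤ volume (E ∩ P) / volume R := by gcongr
    _ ≤ volume ((E \ ball x r) ∩ R) / volume R := by gcongr
    _ ≤ MB B ((E \ ball x r).indicator 1) x :=
        measure_inter_div_le_MB (hE.diff measurableSet_ball) hR hxR

theorem volume_setOf_MB_eq_one_diff_eq_zero
    (hB : ∀ R ∈ B, IsOpen R ∧ Bornology.IsBounded R ∧ Convex ℝ R)
    (hhom : ∀ R ∈ B, ∀ (a : ℝⁿ) (t : ℝ), 0 < t → (fun x => a + t • x) '' R ∈ B)
    (hdens : IsDensityBasis B)
    (htaub : ∀ lam : ℝ, lam ∈ Ioo (0 : ℝ) 1 → ∃ c : ℝ,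
      ∀ E : Set ℝⁿ, MeasurableSet E → volume E < ⊤ →
        volume {x | MB B (E.indicator 1) x > ENNReal.ofReal lam} ≤ ENNReal.ofReal c * volume E)
    (hE : MeasurableSet E) (hfin : volume E ≠ ∞) :
    volume ({x | MB B (E.indicator 1) x = 1} \ E) = 0 := by
  obtain ⟨c, hc⟩ := htaub (8⁻¹ ^ n / 4)
    ⟨by positivity, by linarith [pow_le_one₀ (n := n) (by norm_num : (0 : ℝ) ≤ 8⁻¹) (by norm_num)]⟩
  have htail (m : ℕ) :
      volume ({x | MB B (E.indicator 1) x = 1} \ E) ≤ ENNReal.ofReal c * volume (E \ ball 0 m) := by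
    refine (measure_mono_ae ?_).trans (hc _ (hE.diff measurableSet_ball)
      ((measure_mono sdiff_subset).trans_lt hfin.lt_top))
    filter_upwards [hdens.ae_measure_inter_div_lt_of_diam_lt hE hfin] with x hx_small ⟨hx, hxE⟩
    obtain ⟨r₀, hr₀, hsmall⟩ := hx_small hxE
    refine (ofReal_lt_MB_indicator_diff_ball hB hhom hE hx hr₀ hsmall (r := m + dist 0 x)
      (by positivity)).trans_le (MB_mono (indicator_le_indicator_of_subset ?_ (fun _ => zero_le)) x)
    exact sdiff_subset_sdiff_right (ball_subset_ball' le_rfl)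
  have hlim := ENNReal.Tendsto.const_mul (tendsto_measure_diff_ball_atTop hE hfin 0)
    (Or.inr (ENNReal.ofReal_ne_top (r := c)))
  rw [mul_zero] at hlim
  exact nonpos_iff_eq_zero.1 (ge_of_tendsto' hlim htail)

end MaximalOperator

theorem maximal_level_one_set (n : ℕ) (B : Set (Set (EuclideanSpace ℝ (Fin n))))
    (hB : ∀ R ∈ B, IsOpen R ∧ Bornology.IsBounded R ∧ Convex ℝ R)
    (hhom : ∀ R ∈ B, ∀ (a : EuclideanSpace ℝ (Fin n)) (t : ℝ), 0 < t →
      (fun x => a + t • x) '' R ∈ B)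
    (hdens : IsDensityBasis B)
    (htaub : ∀ lam : ℝ, lam ∈ Set.Ioo (0 : ℝ) 1 → ∃ c : ℝ,
      ∀ E : Set (EuclideanSpace ℝ (Fin n)), MeasurableSet E → volume E < ⊤ →
        volume {x : EuclideanSpace ℝ (Fin n) |
            MB B (E.indicator 1) x > ENNReal.ofReal lam}
          ≤ ENNReal.ofReal c * volume E)
    (E : Set (EuclideanSpace ℝ (Fin n))) (hE : MeasurableSet E) :
    volume {x : EuclideanSpace ℝ (Fin n) | MB B (E.indicator 1) x = 1}
      = volume E := by
  have hE_le : E ≤ᵐ[volume] {x | MB B (E.indicator 1) x = 1} := hdens.ae_MB_indicator_eq_one hE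
  rcases eq_or_ne (volume E) ∞ with hinf | hfin
  · rw [hinf, ← top_le_iff, ← hinf]
    exact measure_mono_ae hE_le
  · exact measure_congr <| (ae_le_set.2 <|
      volume_setOf_MB_eq_one_diff_eq_zero hB hhom hdens htaub hE hfin).antisymm hE_le
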